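/- For all positive integers n and k such that n - k is odd, the Bernoulli–Stirling number of the second kind vanishes: B_{n,k} = 0. -/

import Mathlib

/-- Stirling numbers of the second kind (partition Stirling numbers). -/
def stirling2 : ℕ → ℕ → ℕ
  | 0, 0 => 1
  | 0, _ + 1 => 0
  | _ + 1, 0 => 0
  | n + 1, k + 1 => (k + 1) * stirling2 n (k + 1) + stirling2 n k

/-- Bernoulli–Stirling numbers of the second kind. -/
def bsB (n k : ℕ) : ℚ :=
  ∑ h ∈ Finset.range (n + 1),
    bernoulli h * (n.choose h) * stirling2 (n - h) k * (k : ℚ) ^ h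

/-!
Since `k! S(m, k)` is the `k`-th forward difference of `x ↦ x ^ m` at `0`, expanding
`B_n(x) = Σ_h B_h C(n, h) x^(n-h)` gives
`k! B_{n,k} = k^n Σ_j (-1)^(k-j) C(k, j) B_n(j / k)`.
Substituting `j ↦ k - j` and using `B_n(1 - x) = (-1)^n B_n(x)` multiplies this sum by
`(-1)^(n+k)`, so it vanishes when `n + k` is odd.
-/

open Finset Polynomial
open scoped Nat

theorem stirling2_eq_stirlingSecond : stirling2 = Nat.stirlingSecond := by
  ext n k
  induction n generalizing k with
  | zero => cases k <;> rfl
  | succ n ih => cases k <;> simp [stirling2, Nat.stirlingSecond_succ_succ, ih]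

theorem Polynomial.X_pow_eq_sum_stirlingSecond_mul_descPochhammer (R : Type*) [CommRing R]
    (m : ℕ) : (X : R[X]) ^ m =
      ∑ i ∈ range (m + 1), (Nat.stirlingSecond m i : R[X]) * descPochhammer R i := by
  induction m with
  | zero => simp
  | succ m ih =>
    set g : ℕ → R[X] := fun i => i * (Nat.stirlingSecond m i * descPochhammer R i)
    have hshift : ∑ i ∈ range (m + 1), g (i + 1) = ∑ i ∈ range (m + 1), g i := by
      rw [sum_range_succ, sum_range_succ' g]
      simp [g, Nat.stirlingSecond_eq_zero_of_lt (Nat.lt_succ_self m)]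
    calc (X : R[X]) ^ (m + 1)
        = ∑ i ∈ range (m + 1),
            Nat.stirlingSecond m i * (descPochhammer R (i + 1) + i * descPochhammer R i) := by
          rw [pow_succ', ih, mul_sum]
          exact sum_congr rfl fun i _ => by rw [descPochhammer_succ_right]; ring
      _ = ∑ i ∈ range (m + 1), Nat.stirlingSecond m i * descPochhammer R (i + 1) +
            ∑ i ∈ range (m + 1), g (i + 1) := by
          rw [hshift, ← sum_add_distrib]
          exact sum_congr rfl fun i _ => by ring
      _ = _ := by
          rw [sum_range_succ' _ (m + 1), Nat.stirlingSecond_succ_zero, Nat.cast_zero, zero_mul,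
            add_zero, ← sum_add_distrib]
          refine sum_congr rfl fun i _ => ?_
          simp only [g, Nat.stirlingSecond_succ_succ]
          push_cast
          ring

theorem Nat.factorial_mul_stirlingSecond (m k : ℕ) :
    (k ! * Nat.stirlingSecond m k : ℤ) =
      ∑ j ∈ range (k + 1), (-1) ^ (k - j) * k.choose j * (j : ℤ) ^ m := by
  have hpow : (fun x : ℕ => (x : ℤ) ^ m) =
      ∑ i ∈ range (m + 1),
        (Nat.stirlingSecond m i * i ! : ℤ) • fun x : ℕ => (x.choose i : ℤ) := by
    ext x
    have := congrArg (eval (x : ℤ)) (X_pow_eq_sum_stirlingSecond_mul_descPochhammer ℤ m)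
    simp only [eval_pow, eval_X, eval_finsetSum, eval_mul, eval_natCast,
      descPochhammer_eval_eq_descFactorial, Nat.descFactorial_eq_factorial_mul_choose] at this
    simp [this, mul_assoc]
  calc (k ! * Nat.stirlingSecond m k : ℤ) = (fwdDiff 1)^[k] (fun x : ℕ => (x : ℤ) ^ m) 0 := by
        rw [hpow, fwdDiff_iter_finsetSum, Finset.sum_apply]
        simp only [fwdDiff_iter_const_smul, Pi.smul_apply, fwdDiff_iter_choose_zero, smul_eq_mul,
          mul_ite, mul_one, mul_zero, sum_ite_eq, mem_range]
        split_ifs with hkm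
        · ring
        · rw [Nat.stirlingSecond_eq_zero_of_lt (by omega), Nat.cast_zero, mul_zero]
    _ = _ := by simp [fwdDiff_iter_eq_sum_shift]

theorem Polynomial.pow_mul_bernoulli_eval_div (n : ℕ) (x : ℚ) {y : ℚ} (hy : y ≠ 0) :
    y ^ n * (bernoulli n).eval (x / y) =
      ∑ i ∈ range (n + 1), _root_.bernoulli i * n.choose i * y ^ i * x ^ (n - i) := by
  rw [bernoulli, eval_finsetSum, mul_sum]
  refine sum_congr rfl fun i hi => ?_
  obtain ⟨l, rfl⟩ := Nat.exists_eq_add_of_le (Nat.lt_succ_iff.mp (mem_range.mp hi))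
  rw [eval_monomial, Nat.add_sub_cancel_left, div_pow, pow_add]
  field_simp

theorem sum_neg_one_pow_mul_choose_reflect {R : Type*} [CommRing R] (k : ℕ) (f : ℕ → R) :
    ∑ j ∈ range (k + 1), (-1) ^ (k - j) * k.choose j * f j =
      (-1) ^ k * ∑ j ∈ range (k + 1), (-1) ^ (k - j) * k.choose j * f (k - j) := by
  rw [← sum_range_reflect, mul_sum]
  refine sum_congr rfl fun j hj => ?_
  obtain ⟨i, rfl⟩ := Nat.exists_eq_add_of_le (Nat.lt_succ_iff.mp (mem_range.mp hj))
  rw [Nat.add_sub_cancel, Nat.add_sub_cancel_left, Nat.add_sub_cancel, Nat.choose_symm_add]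
  have hsq : ((-1 : R) ^ i) * (-1) ^ i = 1 := by rw [← mul_pow]; simp
  linear_combination -((-1) ^ j * ((j + i).choose i : R) * f i) * hsq

theorem factorial_mul_bsB (n : ℕ) {k : ℕ} (hk : k ≠ 0) :
    (k ! : ℚ) * bsB n k =
      (k : ℚ) ^ n * ∑ j ∈ range (k + 1),
        (-1) ^ (k - j) * k.choose j * (Polynomial.bernoulli n).eval ((j : ℚ) / k) := by
  have hS (m : ℕ) : (k ! * stirling2 m k : ℚ) =
      ∑ j ∈ range (k + 1), (-1) ^ (k - j) * k.choose j * (j : ℚ) ^ m := by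
    rw [stirling2_eq_stirlingSecond]
    exact_mod_cast Nat.factorial_mul_stirlingSecond m k
  calc (k ! : ℚ) * bsB n k
      = ∑ h ∈ range (n + 1), ∑ j ∈ range (k + 1), _root_.bernoulli h * n.choose h * k ^ h *
          ((-1) ^ (k - j) * k.choose j * (j : ℚ) ^ (n - h)) := by
        rw [bsB, mul_sum]
        refine sum_congr rfl fun h _ => ?_
        rw [← mul_sum, ← hS]
        ring
    _ = ∑ j ∈ range (k + 1), (-1) ^ (k - j) * k.choose j *
          ((k : ℚ) ^ n * (Polynomial.bernoulli n).eval ((j : ℚ) / k)) := by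
        rw [sum_comm]
        refine sum_congr rfl fun j _ => ?_
        rw [pow_mul_bernoulli_eval_div _ _ (Nat.cast_ne_zero.mpr hk), mul_sum]
        exact sum_congr rfl fun h _ => by ring
    _ = _ := by
        rw [mul_sum]
        exact sum_congr rfl fun j _ => by ring

theorem sum_neg_one_pow_mul_choose_bernoulli_eval_div_eq_zero {n k : ℕ} (hk : k ≠ 0)
    (h : Odd (n + k)) :
    ∑ j ∈ range (k + 1),
      (-1) ^ (k - j) * k.choose j * (Polynomial.bernoulli n).eval ((j : ℚ) / k) = 0 := by
  set S : ℚ := ∑ j ∈ range (k + 1),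
    (-1) ^ (k - j) * k.choose j * (Polynomial.bernoulli n).eval ((j : ℚ) / k) with hSdef
  have hsign : (-1 : ℚ) ^ k * (-1) ^ n = -1 := by rw [← pow_add, add_comm]; exact h.neg_one_pow
  have hS : S = -S := calc
    S = (-1) ^ k * ∑ j ∈ range (k + 1),
          (-1) ^ (k - j) * k.choose j * (Polynomial.bernoulli n).eval (((k - j : ℕ) : ℚ) / k) :=
        sum_neg_one_pow_mul_choose_reflect k _
    _ = (-1) ^ k * ((-1) ^ n * S) := by
        congr 1
        rw [hSdef, mul_sum]
        refine sum_congr rfl fun j hj => ?_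
        rw [Nat.cast_sub (Nat.lt_succ_iff.mp (mem_range.mp hj)), sub_div,
          div_self (Nat.cast_ne_zero.mpr hk), bernoulli_eval_one_sub]
        ring
    _ = -S := by rw [← mul_assoc, hsign, neg_one_mul]
  exact self_eq_neg.mp hS

theorem bsB_eq_zero_of_odd_general (n k : ℕ) (hk : 0 < k)
    (h : Odd ((n : ℤ) - k)) : bsB n k = 0 := by
  have hodd : Odd (n + k) := by
    rw [← Int.odd_coe_nat]; push_cast; simpa [Int.odd_add, Int.odd_sub] using h
  have hfac := factorial_mul_bsB n hk.ne'
  rw [sum_neg_one_pow_mul_choose_bernoulli_eval_div_eq_zero hk.ne' hodd, mul_zero] at hfac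
  exact (mul_eq_zero.mp hfac).resolve_left (by positivity)

theorem bsB_eq_zero_of_odd (n k : ℕ) (hn : 0 < n) (hk : 0 < k)
    (h : Odd ((n : ℤ) - k)) : bsB n k = 0 :=
  bsB_eq_zero_of_odd_general n k hk h
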